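/- Let A be a commutative ring with unity, Φ ∈ A^{n×(n-1)}, and Ψ ∈ A^{(n-1)×n} with ΨΦ = I_{n-1}. Define N ∈ A^{n×1} by N_j = (-1)^{j-1} Δ_{·;j}(Ψ) (the signed maximal minor of Ψ omitting column j) and Ñ ∈ A^{1×n} by Ñ_j = (-1)^{j-1} Δ_{j;·}(Φ) (the signed maximal minor of Φ omitting row j). Form the n×n matrices Φ_e = [Φ N] and Ψ_e = [Ψ; Ñ] (Ψ_e has Ψ as its first n-1 rows and Ñ as its last row). Then Ψ_e Φ_e = Φ_e Ψ_e = I_n and det Φ_e = det Ψ_e = (-1)^{n-1}. -/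
import Mathlib

open Matrix Finset Equiv

private lemma det_mul_aux' {n m R : Type*} [DecidableEq n] [Fintype n] [Fintype m]
    [CommRing R] {M : Matrix n m R} {N : Matrix m n R} {p : n → m}
    (H : ¬Function.Injective p) :
    (∑ σ : Perm n, ((Perm.sign σ : ℤ) : R) * ∏ x, M (σ x) (p x) * N (p x) x) = 0 := by
  obtain ⟨i, j, hpij, hij⟩ : ∃ i j, p i = p j ∧ i ≠ j := by
    rw [Function.Injective] at H
    push_neg at H
    obtain ⟨i, j, h1, h2⟩ := H
    exact ⟨i, j, h1, h2⟩
  exact Finset.sum_involution (fun σ _ => σ * Equiv.swap i j)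
    (fun σ _ => by
      have : (∏ x, M (σ x) (p x)) = ∏ x, M ((σ * Equiv.swap i j) x) (p x) :=
        Fintype.prod_equiv (Equiv.swap i j) _ _ (by simp [Equiv.apply_swap_eq_self hpij])
      simp [this, Perm.sign_swap hij, -Perm.sign_swap', prod_mul_distrib])
    (fun σ _ _ => (not_congr Equiv.mul_swap_eq_iff).mpr hij) (fun _ _ => mem_univ _)
    fun σ _ => Equiv.mul_swap_involutive i j σ

private lemma det_mul_expand' {m R : Type*} [DecidableEq m] [Fintype m] [CommRing R]
    (M N : Matrix m m R) :
    det (M * N) =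
      ∑ τ : Perm m, ∑ σ : Perm m, ((Perm.sign σ : ℤ) : R) * ∏ i, M (σ i) (τ i) * N (τ i) i :=
  calc det (M * N)
      = ∑ p : m → m, ∑ σ : Perm m, ((Perm.sign σ : ℤ) : R) * ∏ i, M (σ i) (p i) * N (p i) i := by
        simp only [det_apply', Matrix.mul_apply, prod_univ_sum, mul_sum, Fintype.piFinset_univ]
        rw [Finset.sum_comm]
    _ = ∑ p : m → m with Function.Bijective p,
          ∑ σ : Perm m, ((Perm.sign σ : ℤ) : R) * ∏ i, M (σ i) (p i) * N (p i) i := by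
        refine (sum_subset (filter_subset _ _) fun f _ hbij => Matrix.det_mul_aux ?_).symm
        simpa only [true_and, mem_filter, mem_univ] using hbij
    _ = ∑ τ : Perm m, ∑ σ : Perm m, ((Perm.sign σ : ℤ) : R) * ∏ i, M (σ i) (τ i) * N (τ i) i :=
      sum_bij (fun p h => Equiv.ofBijective p (mem_filter.1 h).2) (fun _ _ => mem_univ _)
        (fun _ _ _ _ h => by injection h)
        (fun b _ => ⟨b, mem_filter.2 ⟨mem_univ _, b.bijective⟩, coe_fn_injective rfl⟩)
        fun _ _ => rfl

private lemma cauchyBinet' {n : ℕ} {R : Type*} [CommRing R]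
    (Ψ : Matrix (Fin n) (Fin (n + 1)) R) (Φ : Matrix (Fin (n + 1)) (Fin n) R) :
    det (Ψ * Φ) = ∑ k : Fin (n + 1),
      det (Ψ.submatrix id k.succAbove) * det (Φ.submatrix k.succAbove id) := by
  have key : ∀ k : Fin (n + 1),
      det (Ψ.submatrix id k.succAbove) * det (Φ.submatrix k.succAbove id)
        = ∑ τ : Perm (Fin n), ∑ σ : Perm (Fin n), ((Perm.sign σ : ℤ) : R) *
            ∏ i, Ψ (σ i) (k.succAbove (τ i)) * Φ (k.succAbove (τ i)) i := fun k => by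
    rw [← det_mul, det_mul_expand']
    rfl
  calc det (Ψ * Φ)
      = ∑ p : Fin n → Fin (n + 1), ∑ σ : Perm (Fin n),
          ((Perm.sign σ : ℤ) : R) * ∏ i, Ψ (σ i) (p i) * Φ (p i) i := by
        simp only [det_apply', Matrix.mul_apply, prod_univ_sum, mul_sum, Fintype.piFinset_univ]
        rw [Finset.sum_comm]
    _ = ∑ p : Fin n → Fin (n + 1) with Function.Injective p, ∑ σ : Perm (Fin n),
          ((Perm.sign σ : ℤ) : R) * ∏ i, Ψ (σ i) (p i) * Φ (p i) i := by
        refine (sum_subset (filter_subset _ _) fun f _ hinj => det_mul_aux' ?_).symm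
        simpa only [true_and, mem_filter, mem_univ] using hinj
    _ = ∑ kτ : Fin (n + 1) × Perm (Fin n), ∑ σ : Perm (Fin n),
          ((Perm.sign σ : ℤ) : R) *
            ∏ i, Ψ (σ i) (kτ.1.succAbove (kτ.2 i)) * Φ (kτ.1.succAbove (kτ.2 i)) i := by
        refine (Finset.sum_bij (fun kτ _ => kτ.1.succAbove ∘ kτ.2) ?_ ?_ ?_ ?_).symm
        · intro kτ _
          exact mem_filter.2 ⟨mem_univ _,
            Fin.succAbove_right_injective.comp kτ.2.injective⟩
        · rintro ⟨k, τ⟩ _ ⟨k', τ'⟩ _ hpe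
          have hk : k = k' := by
            by_contra hkk
            obtain ⟨z, hz⟩ := Fin.exists_succAbove_eq (Ne.symm hkk)
            have h2 := congrFun hpe (τ.symm z)
            simp only [Function.comp_apply, Equiv.apply_symm_apply, hz] at h2
            exact Fin.succAbove_ne k' (τ' (τ.symm z)) h2.symm
          subst hk
          have hτ : τ = τ' := Equiv.coe_fn_injective
            (funext fun x => Fin.succAbove_right_injective (congrFun hpe x))
          rw [hτ]
        · intro p hp
          have hinj : Function.Injective p := by
            simpa only [mem_filter, mem_univ, true_and] using hp
          have hns : ¬Function.Surjective p := by
            intro hs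
            have := Fintype.card_le_of_surjective p hs
            simp at this
          rw [Function.Surjective] at hns
          push_neg at hns
          obtain ⟨k, hk⟩ := hns
          have hpi : ∀ i, ∃ z, k.succAbove z = p i := fun i =>
            Fin.exists_succAbove_eq (hk i)
          choose τ0 hτ0 using hpi
          have hτinj : Function.Injective τ0 := fun a b hab =>
            hinj (by rw [← hτ0 a, ← hτ0 b, hab])
          exact ⟨(k, Equiv.ofBijective τ0 (Finite.injective_iff_bijective.1 hτinj)),
            mem_univ _, funext fun x => hτ0 x⟩
        · intros; rfl
    _ = ∑ k : Fin (n + 1),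
          det (Ψ.submatrix id k.succAbove) * det (Φ.submatrix k.succAbove id) := by
        rw [Fintype.sum_prod_type]
        exact Finset.sum_congr rfl fun k _ => (key k).symm


open Matrix

/-- Theorem 2.4(iii): extending Φ by the column of signed maximal minors of Ψ and Ψ by
the row of signed maximal minors of Φ yields mutually inverse matrices of determinant
(-1)^{n-1}. (Here the big matrices are (n+1)×(n+1).) -/
theorem stmt6 {A : Type*} [CommRing A] {n : ℕ}
    (Φ : Matrix (Fin (n + 1)) (Fin n) A) (Ψ : Matrix (Fin n) (Fin (n + 1)) A)
    (h : Ψ * Φ = 1)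
    (N : Fin (n + 1) → A)
    (hN : ∀ j, N j = (-1 : A) ^ (j : ℕ) * (Ψ.submatrix id j.succAbove).det)
    (Nt : Fin (n + 1) → A)
    (hNt : ∀ j, Nt j = (-1 : A) ^ (j : ℕ) * (Φ.submatrix j.succAbove id).det)
    (Φe Ψe : Matrix (Fin (n + 1)) (Fin (n + 1)) A)
    (hΦe : ∀ i j, Φe i j = (Fin.snoc (Φ i) (N i) : Fin (n + 1) → A) j)
    (hΨe : ∀ i j, Ψe i j = (Fin.snoc (fun q => Ψ q j) (Nt j) : Fin (n + 1) → A) i) :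
    Ψe * Φe = 1 ∧ Φe * Ψe = 1 ∧ Φe.det = (-1 : A) ^ n ∧ Ψe.det = (-1 : A) ^ n := by
  have hcb := cauchyBinet' Ψ Φ
  rw [h, det_one] at hcb
  -- the sum of a row of Ψ against the signed minors of Ψ vanishes
  have hu : ∀ i : Fin n, (∑ k, Ψ i k * N k) = 0 := by
    intro i
    set T : Matrix (Fin (n + 1)) (Fin (n + 1)) A :=
      Matrix.of fun r c => Fin.lastCases (Ψ i c) (fun q => Ψ q c) r with hT
    have hT0 : T.det = 0 := by
      apply det_zero_of_row_eq (Fin.castSucc_lt_last i).ne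
      funext c
      simp [hT]
    have hexp := det_succ_row T (Fin.last n)
    rw [hT0] at hexp
    have hexp2 : (0 : A) = ∑ j : Fin (n + 1),
        (-1 : A) ^ (n + (j : ℕ)) * Ψ i j * det (Ψ.submatrix id j.succAbove) := by
      rw [hexp]
      refine Finset.sum_congr rfl fun j _ => ?_
      have e1 : T (Fin.last n) j = Ψ i j := by simp [hT]
      have e2 : T.submatrix (Fin.last n).succAbove j.succAbove
          = Ψ.submatrix id j.succAbove := by
        ext r c
        simp [hT, Fin.succAbove_last]
      rw [e1, e2, Fin.val_last]
    calc (∑ k, Ψ i k * N k)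
        = ∑ k : Fin (n + 1), (-1 : A) ^ n *
            ((-1 : A) ^ (n + (k : ℕ)) * Ψ i k * det (Ψ.submatrix id k.succAbove)) := by
          refine Finset.sum_congr rfl fun k _ => ?_
          rw [hN k, pow_add]
          have h1 : ((-1 : A)) ^ n * (-1 : A) ^ n = 1 := by
            rw [← mul_pow, neg_mul_neg, one_mul, one_pow]
          linear_combination
            (-(Ψ i k * (-1 : A) ^ (k : ℕ) * det (Ψ.submatrix id k.succAbove))) * h1
      _ = (-1 : A) ^ n * ∑ j : Fin (n + 1),
            (-1 : A) ^ (n + (j : ℕ)) * Ψ i j * det (Ψ.submatrix id j.succAbove) := by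
          rw [Finset.mul_sum]
      _ = 0 := by rw [← hexp2, mul_zero]
  -- the sum of a column of Φ against the signed minors of Φ vanishes
  have hv : ∀ j : Fin n, (∑ k, Nt k * Φ k j) = 0 := by
    intro j
    set S : Matrix (Fin (n + 1)) (Fin (n + 1)) A :=
      Matrix.of fun r c => Fin.lastCases (Φ r j) (fun q => Φ r q) c with hS
    have hS0 : S.det = 0 := by
      apply det_zero_of_column_eq (Fin.castSucc_lt_last j).ne
      intro k
      simp [hS]
    have hexp := det_succ_column S (Fin.last n)
    rw [hS0] at hexp
    have hexp2 : (0 : A) = ∑ i : Fin (n + 1),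
        (-1 : A) ^ ((i : ℕ) + n) * Φ i j * det (Φ.submatrix i.succAbove id) := by
      rw [hexp]
      refine Finset.sum_congr rfl fun i _ => ?_
      have e1 : S i (Fin.last n) = Φ i j := by simp [hS]
      have e2 : S.submatrix i.succAbove (Fin.last n).succAbove
          = Φ.submatrix i.succAbove id := by
        ext r c
        simp [hS, Fin.succAbove_last]
      rw [e1, e2, Fin.val_last]
    calc (∑ k, Nt k * Φ k j)
        = ∑ k : Fin (n + 1), (-1 : A) ^ n *
            ((-1 : A) ^ ((k : ℕ) + n) * Φ k j * det (Φ.submatrix k.succAbove id)) := by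
          refine Finset.sum_congr rfl fun k _ => ?_
          rw [hNt k, pow_add]
          have h1 : ((-1 : A)) ^ n * (-1 : A) ^ n = 1 := by
            rw [← mul_pow, neg_mul_neg, one_mul, one_pow]
          linear_combination
            (-((-1 : A) ^ (k : ℕ) * Φ k j * det (Φ.submatrix k.succAbove id))) * h1
      _ = (-1 : A) ^ n * ∑ i : Fin (n + 1),
            (-1 : A) ^ ((i : ℕ) + n) * Φ i j * det (Φ.submatrix i.succAbove id) := by
          rw [Finset.mul_sum]
      _ = 0 := by rw [← hexp2, mul_zero]
  -- the sum of the two minor vectors is 1 (Cauchy–Binet)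
  have hc : (∑ k, Nt k * N k) = 1 := by
    calc (∑ k, Nt k * N k)
        = ∑ k : Fin (n + 1),
            det (Ψ.submatrix id k.succAbove) * det (Φ.submatrix k.succAbove id) := by
          refine Finset.sum_congr rfl fun k _ => ?_
          rw [hN k, hNt k]
          have h1 : ((-1 : A)) ^ (k : ℕ) * (-1 : A) ^ (k : ℕ) = 1 := by
            rw [← mul_pow, neg_mul_neg, one_mul, one_pow]
          linear_combination
            (det (Ψ.submatrix id k.succAbove) * det (Φ.submatrix k.succAbove id)) * h1
      _ = 1 := hcb.symm
  have hG1 : Ψe * Φe = 1 := by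
    ext i j
    rw [Matrix.mul_apply]
    simp only [hΨe, hΦe]
    induction i using Fin.lastCases with
    | last =>
      simp only [Fin.snoc_last]
      induction j using Fin.lastCases with
      | last =>
        simp only [Fin.snoc_last]
        rw [hc, Matrix.one_apply_eq]
      | cast q =>
        simp only [Fin.snoc_castSucc]
        rw [hv q, Matrix.one_apply_ne (Fin.castSucc_lt_last q).ne']
    | cast p =>
      simp only [Fin.snoc_castSucc]
      induction j using Fin.lastCases with
      | last =>
        simp only [Fin.snoc_last]
        rw [hu p, Matrix.one_apply_ne (Fin.castSucc_lt_last p).ne]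
      | cast q =>
        simp only [Fin.snoc_castSucc]
        have h' : (Ψ * Φ) p q = (1 : Matrix (Fin n) (Fin n) A) p q := by rw [h]
        rw [Matrix.mul_apply] at h'
        rw [h']
        simp [Matrix.one_apply, Fin.castSucc_inj]
  have hG2 : Φe * Ψe = 1 := mul_eq_one_comm.mp hG1
  have hG3 : Φe.det = (-1 : A) ^ n := by
    rw [det_succ_column Φe (Fin.last n)]
    calc ∑ i : Fin (n + 1), (-1 : A) ^ ((i : ℕ) + ((Fin.last n : Fin (n + 1)) : ℕ)) *
          Φe i (Fin.last n) * det (Φe.submatrix i.succAbove (Fin.last n).succAbove)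
        = ∑ i : Fin (n + 1), (-1 : A) ^ n *
            (det (Ψ.submatrix id i.succAbove) * det (Φ.submatrix i.succAbove id)) := by
          refine Finset.sum_congr rfl fun i _ => ?_
          have e1 : Φe i (Fin.last n) = N i := by rw [hΦe]; simp
          have e2 : Φe.submatrix i.succAbove (Fin.last n).succAbove
              = Φ.submatrix i.succAbove id := by
            ext r c
            rw [Matrix.submatrix_apply, Matrix.submatrix_apply, Fin.succAbove_last, hΦe]
            simp
          rw [e1, e2, hN i, Fin.val_last, pow_add]
          have h1 : ((-1 : A)) ^ (i : ℕ) * (-1 : A) ^ (i : ℕ) = 1 := by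
            rw [← mul_pow, neg_mul_neg, one_mul, one_pow]
          linear_combination ((-1 : A) ^ n * det (Ψ.submatrix id i.succAbove) *
            det (Φ.submatrix i.succAbove id)) * h1
      _ = (-1 : A) ^ n := by rw [← Finset.mul_sum, ← hcb, mul_one]
  have hG4 : Ψe.det = (-1 : A) ^ n := by
    rw [det_succ_row Ψe (Fin.last n)]
    calc ∑ j : Fin (n + 1), (-1 : A) ^ (((Fin.last n : Fin (n + 1)) : ℕ) + (j : ℕ)) *
          Ψe (Fin.last n) j * det (Ψe.submatrix (Fin.last n).succAbove j.succAbove)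
        = ∑ j : Fin (n + 1), (-1 : A) ^ n *
            (det (Ψ.submatrix id j.succAbove) * det (Φ.submatrix j.succAbove id)) := by
          refine Finset.sum_congr rfl fun j _ => ?_
          have e1 : Ψe (Fin.last n) j = Nt j := by rw [hΨe]; simp
          have e2 : Ψe.submatrix (Fin.last n).succAbove j.succAbove
              = Ψ.submatrix id j.succAbove := by
            ext r c
            rw [Matrix.submatrix_apply, Matrix.submatrix_apply, Fin.succAbove_last, hΨe]
            simp
          rw [e1, e2, hNt j, Fin.val_last, pow_add]
          have h1 : ((-1 : A)) ^ (j : ℕ) * (-1 : A) ^ (j : ℕ) = 1 := by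
            rw [← mul_pow, neg_mul_neg, one_mul, one_pow]
          linear_combination ((-1 : A) ^ n * det (Ψ.submatrix id j.succAbove) *
            det (Φ.submatrix j.succAbove id)) * h1
      _ = (-1 : A) ^ n := by rw [← Finset.mul_sum, ← hcb, mul_one]
  exact ⟨hG1, hG2, hG3, hG4⟩
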